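/- arXiv:2304.01615 — 3 statements merged into one kernel-verified Lean document; each statement's English description precedes it below -/
import Mathlib

section
/- Let n, m be positive integers, B an n×m real matrix (viewed as a complex matrix) such that the kernel of Bᵀ (as a linear map ℂⁿ → ℂᵐ) equals the span of the all-ones vector 𝟙 ∈ ℂⁿ, and let y : Fin m → ℂ be edge weights with Re(y_e) > 0 for every e. Then the kernel of the matrix Y = B * diag(y) * Bᵀ (as a linear map ℂⁿ → ℂⁿ) equals the span of 𝟙; in particular it is one-dimensional. -/
open Matrix

theorem stmt2 (n m : ℕ) (hn : 0 < n) (hm : 0 < m)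
    (B : Matrix (Fin n) (Fin m) ℝ)
    (Bc : Matrix (Fin n) (Fin m) ℂ) (hBc : Bc = B.map (fun x : ℝ => (x : ℂ)))
    (hker : LinearMap.ker (Bcᵀ).mulVecLin =
      Submodule.span ℂ {(fun _ => 1 : Fin n → ℂ)})
    (y : Fin m → ℂ) (hy : ∀ e, 0 < (y e).re)
    (Y : Matrix (Fin n) (Fin n) ℂ)
    (hY : Y = Bc * Matrix.diagonal y * Bcᵀ) :
    LinearMap.ker Y.mulVecLin = Submodule.span ℂ {(fun _ => 1 : Fin n → ℂ)} ∧
      Module.finrank ℂ (LinearMap.ker Y.mulVecLin) = 1 := by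
  have hBH : Bcᴴ = Bcᵀ := by
    subst hBc
    ext i j
    simp [conjTranspose_apply, Matrix.map_apply]
  have hker_eq : LinearMap.ker Y.mulVecLin =
      Submodule.span ℂ {(fun _ => 1 : Fin n → ℂ)} := by
    apply le_antisymm
    · intro x hx
      rw [LinearMap.mem_ker, mulVecLin_apply] at hx
      -- show Bcᵀ *ᵥ x = 0
      set v := Bcᵀ *ᵥ x with hv
      have key : star v ⬝ᵥ (Matrix.diagonal y *ᵥ v) = 0 := by
        have h1 : star x ⬝ᵥ (Y *ᵥ x) = 0 := by rw [hx, dotProduct_zero]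
        have hBt : Bcᵀᴴ = Bc := by
          subst hBc; ext i j; simp [conjTranspose_apply, Matrix.map_apply]
        have hsx : star x ᵥ* Bc = star v := by
          rw [hv, star_mulVec, hBt]
        have h2 : star x ⬝ᵥ (Y *ᵥ x) = star v ⬝ᵥ (Matrix.diagonal y *ᵥ v) := by
          rw [hY, Matrix.mul_assoc, ← mulVec_mulVec, dotProduct_mulVec, hsx,
            ← mulVec_mulVec, ← hv]
        rw [← h2]; exact h1
      have hv0 : v = 0 := by
        have hre : (star v ⬝ᵥ (Matrix.diagonal y *ᵥ v)).re =
            ∑ e, (y e).re * Complex.normSq (v e) := by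
          rw [dotProduct, Complex.re_sum]
          congr 1
          ext e
          rw [mulVec_diagonal]
          have : (star v) e * (y e * v e) = y e * (Complex.normSq (v e) : ℂ) := by
            simp only [Pi.star_apply]
            rw [Complex.star_def, Complex.normSq_eq_conj_mul_self]
            ring
          rw [this]
          simp [Complex.mul_re]
        have hsum : ∑ e, (y e).re * Complex.normSq (v e) = 0 := by
          rw [← hre, key]; simp
        funext e
        have hnn : ∀ e ∈ (Finset.univ : Finset (Fin m)),
            0 ≤ (y e).re * Complex.normSq (v e) := fun e _ =>
          mul_nonneg (hy e).le (Complex.normSq_nonneg _)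
        have := (Finset.sum_eq_zero_iff_of_nonneg hnn).mp hsum e (Finset.mem_univ e)
        have hns : Complex.normSq (v e) = 0 := by
          rcases mul_eq_zero.mp this with h | h
          · exact absurd h (ne_of_gt (hy e))
          · exact h
        simpa using Complex.normSq_eq_zero.mp hns
      have : x ∈ LinearMap.ker (Bcᵀ).mulVecLin := by
        rw [LinearMap.mem_ker, mulVecLin_apply, ← hv, hv0]
      rwa [hker] at this
    · rw [Submodule.span_le, Set.singleton_subset_iff]
      have h1 : (fun _ => 1 : Fin n → ℂ) ∈ LinearMap.ker (Bcᵀ).mulVecLin := by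
        rw [hker]; exact Submodule.mem_span_singleton_self _
      rw [LinearMap.mem_ker, mulVecLin_apply] at h1
      rw [SetLike.mem_coe, LinearMap.mem_ker, mulVecLin_apply]
      rw [hY, Matrix.mul_assoc, ← mulVec_mulVec, ← mulVec_mulVec, h1]
      simp
  refine ⟨hker_eq, ?_⟩
  rw [hker_eq]
  refine finrank_span_singleton ?_
  intro h
  have := congrFun h ⟨0, hn⟩
  simp at this
end

section
/- Let n, m be positive integers, B an n×m real matrix (viewed as a complex matrix) such that the kernel of Bᵀ (as a linear map ℂⁿ → ℂᵐ) equals the span of the all-ones vector 𝟙 ∈ ℂⁿ, let y : Fin m → ℂ satisfy Re(y_e) > 0 for all e, and let y₀ : Fin n → ℂ satisfy Re(y₀(i)) ≥ 0 for all i. Define Y = B * diag(y) * Bᵀ + diag(y₀). Then Y is invertible if and only if there exists at least one i with y₀(i) ≠ 0. -/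
open Matrix

private lemma auxre (w z : ℂ) : ((starRingEnd ℂ) z * (w * z)).re = w.re * Complex.normSq z := by
  have h : (starRingEnd ℂ) z * (w * z) = w * ((Complex.normSq z : ℝ) : ℂ) := by
    rw [← Complex.mul_conj]; ring
  rw [h]; simp [Complex.mul_re]

theorem stmt3 (n m : ℕ) (hn : 0 < n) (hm : 0 < m)
    (B : Matrix (Fin n) (Fin m) ℝ)
    (Bc : Matrix (Fin n) (Fin m) ℂ) (hBc : Bc = B.map (fun x : ℝ => (x : ℂ)))
    (hker : LinearMap.ker (Bcᵀ).mulVecLin =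
      Submodule.span ℂ {(fun _ => 1 : Fin n → ℂ)})
    (y : Fin m → ℂ) (hy : ∀ e, 0 < (y e).re)
    (y₀ : Fin n → ℂ) (hy₀ : ∀ i, 0 ≤ (y₀ i).re)
    (Y : Matrix (Fin n) (Fin n) ℂ)
    (hY : Y = Bc * Matrix.diagonal y * Bcᵀ + Matrix.diagonal y₀) :
    IsUnit Y ↔ ∃ i, y₀ i ≠ 0 := by
  rw [← Matrix.mulVec_injective_iff_isUnit]
  constructor
  · intro hinj
    by_contra h
    push_neg at h
    have h1 : (fun _ => (1:ℂ) : Fin n → ℂ) ∈ LinearMap.ker (Bcᵀ).mulVecLin := by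
      rw [hker]; exact Submodule.mem_span_singleton_self _
    have hB1 : Bcᵀ *ᵥ (fun _ => (1:ℂ)) = 0 := h1
    have hd : Matrix.diagonal y₀ = 0 := by
      ext i j; by_cases hij : i = j <;> simp [Matrix.diagonal_apply, hij, h]
    have hz : Y *ᵥ (fun _ => (1:ℂ)) = 0 := by
      rw [hY, Matrix.add_mulVec, ← Matrix.mulVec_mulVec, hB1, hd]
      simp
    have heq : Y *ᵥ (fun _ => (1:ℂ)) = Y *ᵥ (0 : Fin n → ℂ) := by
      rw [hz, Matrix.mulVec_zero]
    have := congrFun (hinj heq) ⟨0, hn⟩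
    simp at this
  · rintro ⟨i₀, hi₀⟩
    have key : ∀ x : Fin n → ℂ, Y *ᵥ x = 0 → x = 0 := by
      intro x hx
      set u := Bcᵀ *ᵥ x with hu
      have hstar : star x ᵥ* Bc = star u := by
        ext e
        simp only [Matrix.vecMul, dotProduct, Pi.star_apply, hu, Matrix.mulVec,
          Matrix.transpose_apply, hBc, Matrix.map_apply, Complex.star_def, map_sum, _root_.map_mul,
          Complex.conj_ofReal]
        exact Finset.sum_congr rfl fun i _ => mul_comm _ _
      have hsum : (∑ e, (starRingEnd ℂ) (u e) * (y e * u e))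
          + ∑ i, (starRingEnd ℂ) (x i) * (y₀ i * x i) = 0 := by
        have h0 : star x ⬝ᵥ (Y *ᵥ x) = 0 := by rw [hx, dotProduct_zero]
        rw [hY, Matrix.add_mulVec] at h0
        rw [dotProduct_add] at h0
        rw [← Matrix.mulVec_mulVec, ← Matrix.mulVec_mulVec, ← hu] at h0
        rw [Matrix.dotProduct_mulVec (star x) Bc, hstar] at h0
        simpa [dotProduct, Matrix.mulVec_diagonal, Complex.star_def] using h0
      have hre : (∑ e, (y e).re * Complex.normSq (u e))
          + ∑ i, (y₀ i).re * Complex.normSq (x i) = 0 := by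
        have h' := congrArg Complex.re hsum
        rw [Complex.add_re, Complex.re_sum, Complex.re_sum, Complex.zero_re] at h'
        simp only [auxre] at h'
        exact h'
      have hnn1 : ∀ e ∈ Finset.univ, (0:ℝ) ≤ (y e).re * Complex.normSq (u e) :=
        fun e _ => mul_nonneg (hy e).le (Complex.normSq_nonneg _)
      have hnn2 : ∀ i ∈ Finset.univ, (0:ℝ) ≤ (y₀ i).re * Complex.normSq (x i) :=
        fun i _ => mul_nonneg (hy₀ i) (Complex.normSq_nonneg _)
      have hs1 : (∑ e, (y e).re * Complex.normSq (u e)) = 0 := by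
        have := add_eq_zero_iff_of_nonneg (Finset.sum_nonneg hnn1) (Finset.sum_nonneg hnn2)
        exact (this.mp hre).1
      have hu0 : u = 0 := by
        funext e
        have := (Finset.sum_eq_zero_iff_of_nonneg hnn1).mp hs1 e (Finset.mem_univ e)
        have hns : Complex.normSq (u e) = 0 := by
          rcases mul_eq_zero.mp this with h' | h'
          · exact absurd h' (ne_of_gt (hy e))
          · exact h'
        exact Complex.normSq_eq_zero.mp hns
      have hxker : x ∈ LinearMap.ker (Bcᵀ).mulVecLin := by
        rw [LinearMap.mem_ker, Matrix.mulVecLin_apply, ← hu]; exact hu0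
      rw [hker, Submodule.mem_span_singleton] at hxker
      obtain ⟨c, hc⟩ := hxker
      have hdx : Matrix.diagonal y₀ *ᵥ x = 0 := by
        have := hx
        rw [hY, Matrix.add_mulVec, ← Matrix.mulVec_mulVec, ← Matrix.mulVec_mulVec, ← hu,
          hu0] at this
        simpa using this
      have hxi : y₀ i₀ * x i₀ = 0 := by
        have := congrFun hdx i₀
        simpa [Matrix.mulVec_diagonal] using this
      have hx0 : x i₀ = 0 := by
        rcases mul_eq_zero.mp hxi with h' | h'
        · exact absurd h' hi₀
        · exact h'
      have hc0 : c = 0 := by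
        have := hc ▸ hx0
        simpa using congrArg id this
      rw [← hc, hc0, zero_smul]
    intro a b hab
    have : Y *ᵥ (a - b) = 0 := by rw [Matrix.mulVec_sub, hab, sub_self]
    exact sub_eq_zero.mp (key _ this)
end

section
/- Let n, m be positive integers, B an n×m real matrix (viewed as a complex matrix) such that the kernel of Bᵀ (as a linear map ℂⁿ → ℂᵐ) equals the span of the all-ones vector 𝟙 ∈ ℂⁿ, let y : Fin m → ℂ satisfy Re(y_e) > 0 for all e, and let y₀ : Fin n → ℂ satisfy Re(y₀(i)) ≥ 0 for all i. Define Y = B * diag(y) * Bᵀ + diag(y₀). Then Y * 𝟙 = 0 if and only if Y is not invertible (i.e., Y is singular if and only if it has zero row sums). -/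
open Matrix Complex Finset

theorem stmt4 (n m : ℕ) (hn : 0 < n) (hm : 0 < m)
    (B : Matrix (Fin n) (Fin m) ℝ)
    (Bc : Matrix (Fin n) (Fin m) ℂ) (hBc : Bc = B.map (fun x : ℝ => (x : ℂ)))
    (hker : LinearMap.ker (Bcᵀ).mulVecLin =
      Submodule.span ℂ {(fun _ => 1 : Fin n → ℂ)})
    (y : Fin m → ℂ) (hy : ∀ e, 0 < (y e).re)
    (y₀ : Fin n → ℂ) (hy₀ : ∀ i, 0 ≤ (y₀ i).re)
    (Y : Matrix (Fin n) (Fin n) ℂ)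
    (hY : Y = Bc * Matrix.diagonal y * Bcᵀ + Matrix.diagonal y₀) :
    Y.mulVec (fun _ => 1) = 0 ↔ ¬ IsUnit Y := by
  have hone : (fun _ => (1:ℂ) : Fin n → ℂ) ≠ 0 := by
    intro h0
    have := congrFun h0 ⟨0, hn⟩
    simp at this
  constructor
  · intro h hu
    have hdet : Y.det ≠ 0 := by
      simpa [isUnit_iff_ne_zero] using (Matrix.isUnit_iff_isUnit_det Y).mp hu
    exact hdet (Matrix.exists_mulVec_eq_zero_iff.mp ⟨_, hone, h⟩)
  · intro hu
    have hdet : Y.det = 0 := by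
      by_contra hd
      exact hu ((Matrix.isUnit_iff_isUnit_det Y).mpr (isUnit_iff_ne_zero.mpr hd))
    obtain ⟨v, hv0, hv⟩ := Matrix.exists_mulVec_eq_zero_iff.mpr hdet
    set w := Bcᵀ *ᵥ v with hw
    have hstar : star v ᵥ* Bc = star w := by
      funext e
      simp only [hw, vecMul, mulVec, dotProduct, Pi.star_apply, star_sum, hBc,
        transpose_apply, map_apply, star_mul', Complex.star_def, Complex.conj_ofReal]
      exact Finset.sum_congr rfl (fun j _ => by ring)
    have h0 : star v ⬝ᵥ (Y *ᵥ v) = 0 := by rw [hv]; simp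
    have hterm : star v ⬝ᵥ (Y *ᵥ v) =
        (∑ e, y e * ((normSq (w e) : ℝ) : ℂ)) + ∑ i, y₀ i * ((normSq (v i) : ℝ) : ℂ) := by
      rw [hY, Matrix.add_mulVec, dotProduct_add]
      congr 1
      · rw [Matrix.mul_assoc, ← Matrix.mulVec_mulVec, Matrix.dotProduct_mulVec, hstar,
          ← Matrix.mulVec_mulVec]
        simp only [Matrix.mulVec_diagonal, dotProduct, Pi.star_apply, ← hw]
        exact Finset.sum_congr rfl (fun e _ => by
          rw [← Complex.mul_conj, Complex.star_def]
          ring)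
      · simp only [Matrix.mulVec_diagonal, dotProduct, Pi.star_apply]
        exact Finset.sum_congr rfl (fun i _ => by
          rw [← Complex.mul_conj, Complex.star_def]
          ring)
    have hre : (∑ e, (y e).re * normSq (w e)) + (∑ i, (y₀ i).re * normSq (v i)) = 0 := by
      have := congrArg Complex.re (hterm ▸ h0)
      simpa [Complex.add_re, Complex.re_sum, Complex.mul_re] using this
    have hnn1 : ∀ e ∈ Finset.univ, (0:ℝ) ≤ (y e).re * normSq (w e) :=
      fun e _ => mul_nonneg (le_of_lt (hy e)) (normSq_nonneg _)
    have hnn2 : ∀ i ∈ Finset.univ, (0:ℝ) ≤ (y₀ i).re * normSq (v i) :=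
      fun i _ => mul_nonneg (hy₀ i) (normSq_nonneg _)
    have hs1 : (∑ e, (y e).re * normSq (w e)) = 0 := by
      have h2 : (0:ℝ) ≤ ∑ i, (y₀ i).re * normSq (v i) := Finset.sum_nonneg hnn2
      have h1 : (0:ℝ) ≤ ∑ e, (y e).re * normSq (w e) := Finset.sum_nonneg hnn1
      linarith
    have hw0 : w = 0 := by
      funext e
      have := (Finset.sum_eq_zero_iff_of_nonneg hnn1).mp hs1 e (Finset.mem_univ e)
      have hns : normSq (w e) = 0 := by
        rcases mul_eq_zero.mp this with h | h
        · exact absurd h (ne_of_gt (hy e))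
        · exact h
      simpa using normSq_eq_zero.mp hns
    have hvker : v ∈ LinearMap.ker (Bcᵀ).mulVecLin := by
      rw [LinearMap.mem_ker, Matrix.mulVecLin_apply, ← hw]
      exact hw0
    rw [hker, Submodule.mem_span_singleton] at hvker
    obtain ⟨c, hc⟩ := hvker
    have hcne : c ≠ 0 := by
      rintro rfl
      exact hv0 (by simp [← hc])
    have : c • (Y *ᵥ (fun _ => (1:ℂ))) = 0 := by
      rw [← Matrix.mulVec_smul, hc, hv]
    have := smul_eq_zero.mp this
    tauto
end
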